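/- arXiv:0906.4353 — 6 statements merged into one kernel-verified Lean document; each statement's English description precedes it below -/
import Mathlib

section
/- Fix T > 0. Let (λ_k)_{k≥1} and (μ_k)_{k≥1} be sequences of real numbers with λ_k → +∞ as k → ∞, and suppose there exists a real constant C₀ such that μ_k ≤ C₀ for all k. For each k let f_k : ℝ → ℝ be the fundamental solution with parameters μ_k, λ_k. Then sup_{k≥1} sup_{t∈[0,T]} f_k'(t)² < ∞, where f_k' denotes the time derivative of f_k. -/
/-!
The energy `E = f'² + λ f²` of a solution of `f'' - μ f' + λ f = 0` satisfies `E' = 2 μ f'²`.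
When `λ ≥ 0` and `μ ≤ C` with `C ≥ 0` this gives `E' ≤ 2 C E`, so by Grönwall
`f'(t)² ≤ E(t) ≤ E(0) e^{2Ct} = e^{2Ct}`, uniformly in `k`. Since `λ_k → ∞`, only finitely many
`k` have `λ_k < 0`, and each of those has `f_k'²` bounded on the compact interval `[0, T]`.
-/

open Real Set Filter

theorem le_mul_exp_of_hasDerivAt_le_mul {E E' : ℝ → ℝ} {K : ℝ}
    (hE : ∀ t, HasDerivAt E (E' t) t) (bound : ∀ t, E' t ≤ K * E t) {t : ℝ} (ht : 0 ≤ t) :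
    E t ≤ E 0 * exp (K * t) := by
  have := le_gronwallBound_of_liminf_deriv_right_le (b := t) (ε := 0)
    (fun s _ => (hE s).continuousAt.continuousWithinAt)
    (fun s _ _ hr => (hE s).hasDerivWithinAt.liminf_right_slope_le hr) le_rfl
    (fun s _ => by simpa using bound s) t ⟨ht, le_rfl⟩
  rwa [sub_zero, gronwallBound_ε0] at this

section Energy

variable {mu lam : ℝ} {f : ℝ → ℝ}

theorem hasDerivAt_energy (hf : ContDiff ℝ 2 f)
    (hode : ∀ t, deriv (deriv f) t - mu * deriv f t + lam * f t = 0) (t : ℝ) :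
    HasDerivAt (fun s => deriv f s ^ 2 + lam * f s ^ 2) (2 * mu * deriv f t ^ 2) t := by
  have hf' : HasDerivAt f (deriv f t) t :=
    (hf.differentiable (by norm_num) t).hasDerivAt
  have hf'' : HasDerivAt (deriv f) (deriv (deriv f) t) t :=
    (hf.differentiable_deriv_two t).hasDerivAt
  refine ((hf''.pow 2).add ((hf'.pow 2).const_mul lam)).congr_deriv ?_
  linear_combination (2 * deriv f t) * hode t

theorem energy_le_mul_exp (hf : ContDiff ℝ 2 f)
    (hode : ∀ t, deriv (deriv f) t - mu * deriv f t + lam * f t = 0)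
    (hlam : 0 ≤ lam) {C : ℝ} (hC : 0 ≤ C) (hmu : mu ≤ C) {t : ℝ} (ht : 0 ≤ t) :
    deriv f t ^ 2 + lam * f t ^ 2 ≤ (deriv f 0 ^ 2 + lam * f 0 ^ 2) * exp (2 * C * t) := by
  refine le_mul_exp_of_hasDerivAt_le_mul (hasDerivAt_energy hf hode) (fun s => ?_) ht
  have hsq := sq_nonneg (deriv f s)
  have hpot := mul_nonneg hlam (sq_nonneg (f s))
  nlinarith [mul_le_mul_of_nonneg_right hmu hsq, mul_nonneg hC hpot]

end Energy

theorem exists_forall_le_of_eventually_le {α β : Type*} [SemilatticeSup β] [Nonempty β]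
    {u : ℕ → α → β} {s : Set α} {M : β} (hu : ∀ k, BddAbove (u k '' s))
    (hev : ∀ᶠ k in atTop, ∀ t ∈ s, u k t ≤ M) : ∃ M', ∀ k, ∀ t ∈ s, u k t ≤ M' := by
  obtain ⟨N, hN⟩ := eventually_atTop.1 hev
  choose B hB using hu
  obtain ⟨M₁, hM₁⟩ := ((finite_Iio N).image B).bddAbove
  refine ⟨M ⊔ M₁, fun k t ht => ?_⟩
  rcases le_or_gt N k with hk | hk
  · exact (hN k hk t ht).trans le_sup_left
  · exact ((hB k ⟨t, ht, rfl⟩).trans (hM₁ ⟨k, hk, rfl⟩)).trans le_sup_right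

theorem stmt_3_general (T : ℝ) (lam mu : ℕ → ℝ)
    (hlam : Filter.Tendsto lam Filter.atTop Filter.atTop)
    (C₀ : ℝ) (hbdd : ∀ k, mu k ≤ C₀)
    (f : ℕ → ℝ → ℝ)
    (hreg : ∀ k, ContDiff ℝ 2 (f k))
    (hode : ∀ k, ∀ t : ℝ,
      deriv (deriv (f k)) t - mu k * deriv (f k) t + lam k * f k t = 0)
    (hf0 : ∀ k, f k 0 = 0) (hf'0 : ∀ k, deriv (f k) 0 = 1) :
    ∃ M : ℝ, ∀ k, 1 ≤ k → ∀ t ∈ Set.Icc (0 : ℝ) T, (deriv (f k) t) ^ 2 ≤ M := by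
  set C := max C₀ 0
  have hC : 0 ≤ C := le_max_right C₀ 0
  have hcompact : ∀ k, BddAbove ((fun t => deriv (f k) t ^ 2) '' Icc 0 T) := fun k =>
    isCompact_Icc.bddAbove_image (((hreg k).continuous_deriv (by norm_num)).pow 2).continuousOn
  have hlarge : ∀ᶠ k in atTop, ∀ t ∈ Icc 0 T, deriv (f k) t ^ 2 ≤ exp (2 * C * T) := by
    filter_upwards [hlam.eventually_ge_atTop 0] with k hk t ht
    have hE := energy_le_mul_exp (hreg k) (hode k) hk hC ((hbdd k).trans (le_max_left C₀ 0)) ht.1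
    rw [hf0 k, hf'0 k] at hE
    calc deriv (f k) t ^ 2 ≤ exp (2 * C * t) := by nlinarith [mul_nonneg hk (sq_nonneg (f k t))]
      _ ≤ exp (2 * C * T) := by gcongr; exact ht.2
  obtain ⟨M, hM⟩ := exists_forall_le_of_eventually_le hcompact hlarge
  exact ⟨M, fun k _ => hM k⟩

/-- Uniform boundedness of the squared derivatives of the fundamental
solutions `f_k` of `f'' - μ_k f' + λ_k f = 0`, `f 0 = 0`, `f' 0 = 1`, on `[0, T]`,
under `λ_k → +∞` and `μ_k ≤ C₀` for all `k`. -/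
theorem stmt_3 (T : ℝ) (hT : 0 < T) (lam mu : ℕ → ℝ)
    (hlam : Filter.Tendsto lam Filter.atTop Filter.atTop)
    (C₀ : ℝ) (hbdd : ∀ k, mu k ≤ C₀)
    (f : ℕ → ℝ → ℝ)
    (hreg : ∀ k, ContDiff ℝ 2 (f k))
    (hode : ∀ k, ∀ t : ℝ,
      deriv (deriv (f k)) t - mu k * deriv (f k) t + lam k * f k t = 0)
    (hf0 : ∀ k, f k 0 = 0) (hf'0 : ∀ k, deriv (f k) 0 = 1) :
    ∃ M : ℝ, ∀ k, 1 ≤ k → ∀ t ∈ Set.Icc (0 : ℝ) T, (deriv (f k) t) ^ 2 ≤ M :=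
  stmt_3_general T lam mu hlam C₀ hbdd f hreg hode hf0 hf'0
end

section
/- Let (χ_k)_{k≥1} be a sequence of mutually independent real-valued random variables on a probability space, each with zero mean and positive finite variance (E χ_k = 0 and 0 < E χ_k² < ∞). If ∑_{k≥1} E χ_k² = +∞, then the ratio (∑_{k=1}^N χ_k)/(∑_{k=1}^N E χ_k²) converges to 0 almost surely as N → ∞. -/
/-!
Write `S N = ∑_{k<N} E χ_k²`. The normalised variables `χ_k / S (k+1)` are independent and
centred, and their variances `E χ_k² / S (k+1)²` are dominated by the telescoping terms
`1 / S k - 1 / S (k+1)`, so their total variance is finite. Their partial sums are therefore an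
`L²`-bounded martingale and converge almost surely. Kronecker's lemma (summation by parts followed
by a weighted Cesàro mean) turns the convergence of `∑ χ_k / S (k+1)` into
`(∑_{k<N} χ_k) / S N → 0`.
-/

open MeasureTheory ProbabilityTheory Filter Finset Topology

theorem Filter.Tendsto.weighted_cesaro {v a : ℕ → ℝ} {l : ℝ} (ha : Tendsto a atTop (𝓝 l))
    (hv : ∀ k, 0 ≤ v k) (hdiv : Tendsto (fun N => ∑ k ∈ range N, v k) atTop atTop) :
    Tendsto (fun N => (∑ k ∈ range N, v k * a k) / ∑ k ∈ range N, v k) atTop (𝓝 l) := by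
  have hsmall : (fun N => ∑ k ∈ range N, v k * (a k - l)) =o[atTop]
      fun N => ∑ k ∈ range N, v k := by
    refine Asymptotics.IsLittleO.sum_range ?_ hv hdiv
    have := (Asymptotics.isLittleO_one_iff ℝ).2 (tendsto_sub_nhds_zero_iff.2 ha)
    simpa using (Asymptotics.isBigO_refl v atTop).mul_isLittleO this
  have hlim := hsmall.tendsto_div_nhds_zero.add_const l
  rw [zero_add] at hlim
  refine hlim.congr' ?_
  filter_upwards [hdiv.eventually_gt_atTop 0] with N hN
  simp only [mul_sub, sum_sub_distrib, ← sum_mul]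
  field_simp
  ring

theorem kronecker_tendsto_zero {v x : ℕ → ℝ} (hv : ∀ k, 0 ≤ v k) (hv0 : 0 < v 0)
    (hdiv : Tendsto (fun N => ∑ k ∈ range N, v k) atTop atTop) {l : ℝ}
    (hx : Tendsto (fun N => ∑ k ∈ range N, x k / ∑ j ∈ range (k + 1), v j) atTop (𝓝 l)) :
    Tendsto (fun N => (∑ k ∈ range N, x k) / ∑ k ∈ range N, v k) atTop (𝓝 0) := by
  set S : ℕ → ℝ := fun N => ∑ k ∈ range N, v k
  set A : ℕ → ℝ := fun N => ∑ k ∈ range N, x k / S (k + 1)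
  have hS : ∀ N, 0 < S (N + 1) := fun N =>
    hv0.trans_le (single_le_sum (fun k _ => hv k) (by simp))
  have abel : ∀ N, ∑ k ∈ range N, x k = S N * A N - ∑ k ∈ range N, v k * A k := by
    intro N
    induction N with
    | zero => simp [S, A]
    | succ N ih =>
      have hA : A (N + 1) = A N + x N / S (N + 1) := sum_range_succ _ _
      have hS' : S (N + 1) = S N + v N := sum_range_succ _ _
      rw [sum_range_succ, sum_range_succ, ih, hA, hS']
      have hpos := hS N
      rw [hS'] at hpos
      field_simp
      ring
  have hlim := hx.sub (hx.weighted_cesaro hv hdiv)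
  rw [sub_self] at hlim
  refine hlim.congr' ?_
  filter_upwards [hdiv.eventually_gt_atTop 0] with N hN
  rw [abel N, sub_div, mul_div_cancel_left₀ _ hN.ne']

theorem sum_range_div_sum_range_succ_sq_le {v : ℕ → ℝ} (hv : ∀ k, 0 ≤ v k) (hv0 : 0 < v 0)
    (n : ℕ) :
    ∑ k ∈ range n, v k / (∑ j ∈ range (k + 1), v j) ^ 2 ≤ 2 / v 0 := by
  set S : ℕ → ℝ := fun N => ∑ k ∈ range N, v k
  have hS : ∀ N, v 0 ≤ S (N + 1) := fun N => single_le_sum (fun k _ => hv k) (by simp)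
  suffices ∀ n, ∑ k ∈ range (n + 1), v k / S (k + 1) ^ 2 ≤ 2 / v 0 - 1 / S (n + 1) by
    cases n with
    | zero => simp only [range_zero, sum_empty]; positivity
    | succ n => exact (this n).trans (sub_le_self _ (one_div_nonneg.2 (hv0.le.trans (hS n))))
  intro n
  induction n with
  | zero =>
    simp only [zero_add, range_one, sum_singleton, S]
    field_simp
    linarith
  | succ n ih =>
    rw [sum_range_succ]
    have hS' : S (n + 2) = S (n + 1) + v (n + 1) := sum_range_succ _ _
    have ha : 0 < S (n + 1) := hv0.trans_le (hS n)
    have hb : 0 < S (n + 2) := hv0.trans_le (hS (n + 1))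
    have step : v (n + 1) / S (n + 2) ^ 2 ≤ 1 / S (n + 1) - 1 / S (n + 2) := by
      have h3 : 1 / S (n + 1) - 1 / S (n + 2) = v (n + 1) / (S (n + 1) * S (n + 2)) := by
        field_simp
        rw [hS']
        ring
      rw [h3, pow_two]
      gcongr
      · exact hv _
      · linarith [hv (n + 1)]
    linarith

namespace ProbabilityTheory

variable {Ω : Type*} [MeasurableSpace Ω] {μ : Measure Ω}

theorem eLpNorm_one_le_ofReal_sqrt_integral_sq [IsProbabilityMeasure μ] {X : Ω → ℝ}
    (hX : MemLp X 2 μ) : eLpNorm X 1 μ ≤ ENNReal.ofReal √(∫ ω, X ω ^ 2 ∂μ) := by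
  calc eLpNorm X 1 μ ≤ eLpNorm X 2 μ := eLpNorm_le_eLpNorm_of_exponent_le one_le_two hX.1
    _ = _ := by
      rw [hX.eLpNorm_eq_integral_rpow_norm two_ne_zero ENNReal.ofNat_ne_top, Real.sqrt_eq_rpow]
      simp

variable {Y : ℕ → Ω → ℝ}

theorem iIndepFun.martingale_sum_range_succ (hY : ∀ k, StronglyMeasurable (Y k))
    (hindep : iIndepFun Y μ) (hint : ∀ k, Integrable (Y k) μ) (hmean : ∀ k, μ[Y k] = 0) :
    Martingale (fun n => ∑ k ∈ range (n + 1), Y k) (Filtration.natural Y hY) μ := by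
  have := hindep.isProbabilityMeasure
  have hsum_int : ∀ n, Integrable (∑ k ∈ range (n + 1), Y k) μ :=
    fun n => integrable_finsetSum' _ fun k _ => hint k
  have hadapted : StronglyAdapted (Filtration.natural Y hY) fun n => ∑ k ∈ range (n + 1), Y k :=
    fun n => Finset.stronglyMeasurable_sum _ fun k hk =>
      (Filtration.stronglyAdapted_natural hY k).mono
        (Filtration.mono _ (Nat.lt_succ_iff.1 (mem_range.1 hk)))
  refine martingale_nat hadapted hsum_int fun n => ?_
  have hindep_next := hindep.condExp_natural_ae_eq_of_lt hY (Nat.lt_add_one n)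
  rw [sum_range_succ _ (n + 1)]
  filter_upwards [condExp_add (hsum_int n) (hint (n + 1)) (Filtration.natural Y hY n),
    hindep_next] with ω hsum hnext
  rw [hsum, Pi.add_apply, hnext, hmean, add_zero,
    condExp_of_stronglyMeasurable (Filtration.le _ n) (hadapted n) (hsum_int n)]

theorem iIndepFun.ae_exists_tendsto_sum_range (hY : ∀ k, Measurable (Y k))
    (hindep : iIndepFun Y μ) (hL2 : ∀ k, MemLp (Y k) 2 μ) (hmean : ∀ k, μ[Y k] = 0) {C : ℝ}
    (hvar : ∀ n, ∑ k ∈ range n, Var[Y k; μ] ≤ C) :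
    ∀ᵐ ω ∂μ, ∃ c, Tendsto (fun n => ∑ k ∈ range n, Y k ω) atTop (𝓝 c) := by
  have := hindep.isProbabilityMeasure
  have hint : ∀ k, Integrable (Y k) μ := fun k => (hL2 k).integrable one_le_two
  have hmart := hindep.martingale_sum_range_succ (fun k => (hY k).stronglyMeasurable) hint hmean
  have hbdd : ∀ n, eLpNorm (∑ k ∈ range (n + 1), Y k) 1 μ ≤ (√C).toNNReal := fun n =>
    calc eLpNorm (∑ k ∈ range (n + 1), Y k) 1 μ
        ≤ ENNReal.ofReal √(∫ ω, (∑ k ∈ range (n + 1), Y k) ω ^ 2 ∂μ) :=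
          eLpNorm_one_le_ofReal_sqrt_integral_sq (memLp_finsetSum' _ fun k _ => hL2 k)
      _ = ENNReal.ofReal √(∑ k ∈ range (n + 1), Var[Y k; μ]) := by
          rw [← variance_of_integral_eq_zero (by fun_prop), IndepFun.variance_sum
            (fun k _ => hL2 k) fun i _ j _ hij => hindep.indepFun hij]
          simp only [Finset.sum_apply]
          rw [integral_finsetSum _ fun k _ => hint k]
          exact sum_eq_zero fun k _ => hmean k
      _ ≤ ENNReal.ofReal √C := by gcongr; exact hvar _
  filter_upwards [hmart.submartingale.exists_ae_tendsto_of_bdd hbdd] with ω ⟨c, hc⟩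
  exact ⟨c, (tendsto_add_atTop_iff_nat 1).1 (by simpa only [Finset.sum_apply] using hc)⟩

end ProbabilityTheory

theorem stmt_7_general {Ω : Type*} [MeasureSpace Ω]
    (χ : ℕ → Ω → ℝ)
    (hmeas : ∀ k, Measurable (χ k))
    (hindep : iIndepFun χ ℙ)
    (hL2 : ∀ k, MemLp (χ k) 2 ℙ)
    (hmean : ∀ k, ∫ ω, χ k ω ∂ℙ = 0)
    (hvarpos : ∀ k, 0 < ∫ ω, (χ k ω) ^ 2 ∂ℙ)
    (hdiv : Tendsto (fun N => ∑ k ∈ Finset.range N, ∫ ω, (χ k ω) ^ 2 ∂ℙ)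
      atTop atTop) :
    ∀ᵐ ω ∂ℙ, Tendsto
      (fun N => (∑ k ∈ Finset.range N, χ k ω) /
        (∑ k ∈ Finset.range N, ∫ ω', (χ k ω') ^ 2 ∂ℙ))
      atTop (nhds 0) := by
  set v : ℕ → ℝ := fun k => ∫ ω, χ k ω ^ 2 ∂ℙ
  have hv : ∀ k, 0 ≤ v k := fun k => (hvarpos k).le
  have hvar : ∀ k, Var[χ k] = v k := fun k =>
    variance_of_integral_eq_zero (hmeas k).aemeasurable (hmean k)
  have hconv : ∀ᵐ ω ∂ℙ, ∃ c, Tendsto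
      (fun N => ∑ k ∈ range N, χ k ω / ∑ j ∈ range (k + 1), v j) atTop (𝓝 c) := by
    refine (hindep.comp (fun k x => x / ∑ j ∈ range (k + 1), v j)
      fun k => measurable_id.div_const _).ae_exists_tendsto_sum_range
      (fun k => (hmeas k).div_const _) (fun k => ?_) (fun k => ?_) (C := 2 / v 0) fun n => ?_
    · simpa only [div_eq_mul_inv] using (hL2 k).mul_const _
    · simp only [integral_div, hmean, zero_div]
    · simpa only [div_eq_mul_inv, variance_mul_const, hvar, inv_pow]
        using sum_range_div_sum_range_succ_sq_le hv (hvarpos 0) n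
  filter_upwards [hconv] with ω ⟨c, hc⟩
  exact kronecker_tendsto_zero hv (hvarpos 0) hdiv hc

/-- A law of large numbers: for independent, zero-mean, square-integrable
random variables `χ_k` with positive variances whose total variance diverges,
`(∑_{k<N} χ_k) / (∑_{k<N} E χ_k²) → 0` almost surely. -/
theorem stmt_7 {Ω : Type*} [MeasureSpace Ω] [IsProbabilityMeasure (ℙ : Measure Ω)]
    (χ : ℕ → Ω → ℝ)
    (hmeas : ∀ k, Measurable (χ k))
    (hindep : iIndepFun χ ℙ)
    (hL2 : ∀ k, MemLp (χ k) 2 ℙ)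
    (hmean : ∀ k, ∫ ω, χ k ω ∂ℙ = 0)
    (hvarpos : ∀ k, 0 < ∫ ω, (χ k ω) ^ 2 ∂ℙ)
    (hdiv : Tendsto (fun N => ∑ k ∈ Finset.range N, ∫ ω, (χ k ω) ^ 2 ∂ℙ)
      atTop atTop) :
    ∀ᵐ ω ∂ℙ, Tendsto
      (fun N => (∑ k ∈ Finset.range N, χ k ω) /
        (∑ k ∈ Finset.range N, ∫ ω', (χ k ω') ^ 2 ∂ℙ))
      atTop (nhds 0) :=
  stmt_7_general χ hmeas hindep hL2 hmean hvarpos hdiv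
end

section
/- Let γ be a real number and set a_n = n^γ for n ≥ 1. Then the sequence (a_n) is slowly increasing, i.e. (∑_{k=1}^n a_k²)/(∑_{k=1}^n a_k)² → 0 as n → ∞, if and only if γ ≥ −1. -/
/-!
If `γ < -1` the series `∑ n ^ γ` converges, so the partial sums stay below its value `L` and the
ratio is at least `1 / L ^ 2 > 0`. If `γ ≥ -1`, then `∑ a_k ^ 2 ≤ (max_{k ≤ n} a_k) ∑ a_k`, so the
ratio is at most `max_{k ≤ n} a_k / ∑_{k ≤ n} a_k`. For `γ ≤ 0` the maximum is `1` and the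
partial sums of the divergent `p`-series tend to infinity; for `γ ≥ 0` the maximum is `n ^ γ`,
while `∑_{k ≤ n} k ^ γ ≥ ∫₀ⁿ x ^ γ dx = n ^ (γ + 1) / (γ + 1)`.
-/

open Filter Finset Topology

def SlowlyIncreasing (a : ℕ → ℝ) : Prop :=
  Tendsto (fun n => (∑ k ∈ Icc 1 n, a k ^ 2) / (∑ k ∈ Icc 1 n, a k) ^ 2) atTop (𝓝 0)

lemma Finset.sum_Icc_one_eq_sum_range {M : Type*} [AddCommMonoid M] (f : ℕ → M) (n : ℕ) :
    ∑ k ∈ Icc 1 n, f k = ∑ k ∈ range n, f (k + 1) := by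
  rw [range_eq_Ico, sum_Ico_add', zero_add, Ico_add_one_right_eq_Icc]

lemma tendsto_sum_Icc_one_atTop_of_not_summable {a : ℕ → ℝ} (h0 : ∀ k, 0 ≤ a k)
    (ha : ¬Summable a) : Tendsto (fun n => ∑ k ∈ Icc 1 n, a k) atTop atTop := by
  simp_rw [sum_Icc_one_eq_sum_range]
  exact (not_summable_iff_tendsto_nat_atTop_of_nonneg fun k => h0 (k + 1)).1
    (by rwa [summable_nat_add_iff])

lemma Finset.sum_sq_le_mul_sum {ι : Type*} {s : Finset ι} {a : ι → ℝ} {M : ℝ}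
    (h0 : ∀ k ∈ s, 0 ≤ a k) (hM : ∀ k ∈ s, a k ≤ M) :
    ∑ k ∈ s, a k ^ 2 ≤ M * ∑ k ∈ s, a k := by
  rw [mul_sum]
  exact sum_le_sum fun k hk => by
    rw [sq]
    exact mul_le_mul_of_nonneg_right (hM k hk) (h0 k hk)

namespace SlowlyIncreasing

variable {a : ℕ → ℝ}

theorem of_tendsto_div_sum {b : ℕ → ℝ} (h0 : ∀ k, 0 ≤ a k)
    (hb : ∀ n, ∀ k ∈ Icc 1 n, a k ≤ b n)
    (h : Tendsto (fun n => b n / ∑ k ∈ Icc 1 n, a k) atTop (𝓝 0)) : SlowlyIncreasing a := by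
  refine squeeze_zero (fun n => by positivity) (fun n => ?_) h
  rcases (sum_nonneg fun k _ => h0 k : 0 ≤ ∑ k ∈ Icc 1 n, a k).eq_or_lt with hS | hS
  · -- both sides are `0` by the convention `x / 0 = 0`
    rw [← hS]
    simp
  calc (∑ k ∈ Icc 1 n, a k ^ 2) / (∑ k ∈ Icc 1 n, a k) ^ 2
      ≤ b n * (∑ k ∈ Icc 1 n, a k) / (∑ k ∈ Icc 1 n, a k) ^ 2 :=
        div_le_div_of_nonneg_right (sum_sq_le_mul_sum (fun k _ => h0 k) (hb n)) (sq_nonneg _)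
    _ = b n / ∑ k ∈ Icc 1 n, a k := by rw [sq, mul_div_mul_right _ _ hS.ne']

theorem not_summable (h0 : ∀ k, 0 ≤ a k) {m : ℕ} (hm : 1 ≤ m) (ham : 0 < a m)
    (h : SlowlyIncreasing a) : ¬Summable a := by
  intro hs
  have hL : 0 < ∑' k, a k := hs.tsum_pos h0 m ham
  have hbound : ∀ n ≥ m,
      a m ^ 2 / (∑' k, a k) ^ 2 ≤ (∑ k ∈ Icc 1 n, a k ^ 2) / (∑ k ∈ Icc 1 n, a k) ^ 2 := by
    intro n hn
    have hmem : m ∈ Icc 1 n := mem_Icc.2 ⟨hm, hn⟩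
    have hS : a m ≤ ∑ k ∈ Icc 1 n, a k := single_le_sum (fun k _ => h0 k) hmem
    refine div_le_div₀ (by positivity) ?_ (pow_pos (ham.trans_le hS) 2) ?_
    · exact single_le_sum (f := fun k => a k ^ 2) (fun k _ => sq_nonneg _) hmem
    · exact pow_le_pow_left₀ (ham.le.trans hS) (hs.sum_le_tsum _ fun k _ => h0 k) 2
  exact (ge_of_tendsto h (eventually_atTop.2 ⟨m, hbound⟩)).not_gt (by positivity)

end SlowlyIncreasing

section RealPower

variable {γ : ℝ}

lemma tendsto_sum_rpow_atTop (hγ : -1 ≤ γ) :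
    Tendsto (fun n : ℕ => ∑ k ∈ Icc 1 n, (k : ℝ) ^ γ) atTop atTop :=
  tendsto_sum_Icc_one_atTop_of_not_summable (fun k => by positivity)
    (by rw [Real.summable_nat_rpow]; linarith)

lemma rpow_add_one_div_le_sum_rpow (hγ : 0 ≤ γ) (n : ℕ) :
    (n : ℝ) ^ (γ + 1) / (γ + 1) ≤ ∑ k ∈ Icc 1 n, (k : ℝ) ^ γ := by
  have hmono : MonotoneOn (fun x : ℝ => x ^ γ) (Set.Icc 0 (0 + n)) :=
    fun x hx y _ hxy => Real.rpow_le_rpow hx.1 hxy hγ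
  have := hmono.integral_le_sum
  rw [integral_rpow (Or.inl (by linarith)), Real.zero_rpow (by linarith), sub_zero,
    zero_add] at this
  simpa [sum_Icc_one_eq_sum_range] using this

lemma tendsto_rpow_div_sum_rpow (hγ : 0 ≤ γ) :
    Tendsto (fun n : ℕ => (n : ℝ) ^ γ / ∑ k ∈ Icc 1 n, (k : ℝ) ^ γ) atTop (𝓝 0) := by
  refine squeeze_zero' (Eventually.of_forall fun n => by positivity)
    (eventually_atTop.2 ⟨1, fun n hn => ?_⟩) (tendsto_const_div_atTop_nhds_zero_nat (γ + 1))
  have hn : (0 : ℝ) < n := by exact_mod_cast hn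
  calc (n : ℝ) ^ γ / ∑ k ∈ Icc 1 n, (k : ℝ) ^ γ ≤ (n : ℝ) ^ γ / ((n : ℝ) ^ (γ + 1) / (γ + 1)) :=
        div_le_div_of_nonneg_left (by positivity) (by positivity)
          (rpow_add_one_div_le_sum_rpow hγ n)
    _ = (γ + 1) / n := by
        rw [Real.rpow_add_one hn.ne']
        field_simp

end RealPower

/-- The sequence `a_n = n^γ` is slowly increasing if and only if `γ ≥ -1`. -/
theorem stmt_11 (γ : ℝ) :
    Tendsto (fun n : ℕ =>
        (∑ k ∈ Finset.Icc 1 n, ((k : ℝ) ^ γ) ^ 2) /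
          (∑ k ∈ Finset.Icc 1 n, (k : ℝ) ^ γ) ^ 2)
      atTop (nhds 0) ↔ -1 ≤ γ := by
  change SlowlyIncreasing (fun k : ℕ => (k : ℝ) ^ γ) ↔ _
  have h0 : ∀ k : ℕ, 0 ≤ (k : ℝ) ^ γ := fun k => by positivity
  constructor
  · intro h
    by_contra! hγ
    exact h.not_summable h0 le_rfl (by simp) (Real.summable_nat_rpow.2 hγ)
  · intro hγ
    rcases le_total γ 0 with hγ0 | hγ0
    · refine .of_tendsto_div_sum (b := 1) h0 (fun n k hk => ?_) ?_
      · exact Real.rpow_le_one_of_one_le_of_nonpos (by exact_mod_cast (mem_Icc.1 hk).1) hγ0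
      · simpa [Pi.inv_def] using (tendsto_sum_rpow_atTop hγ).inv_tendsto_atTop
    · refine .of_tendsto_div_sum h0 (fun n k hk => ?_) (tendsto_rpow_div_sum_rpow hγ0)
      exact Real.rpow_le_rpow k.cast_nonneg (by exact_mod_cast (mem_Icc.1 hk).2) hγ0
end

section
/- For every real number x, the inequality x·e^x − x ≤ 4·(e^x − x − 1)·(1 + max(0, x)) holds. -/
/-- For every real `x`, `x e^x - x ≤ 4 (e^x - x - 1)(1 + max 0 x)`. -/
theorem stmt_14 (x : ℝ) :
    x * Real.exp x - x ≤ 4 * (Real.exp x - x - 1) * (1 + max 0 x) := by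
  have h2 : Real.exp (x / 2) * Real.exp (x / 2) = Real.exp x := by
    rw [← Real.exp_add]; ring_nf
  have hh : 1 + x / 2 ≤ Real.exp (x / 2) := by
    have := Real.add_one_le_exp (x / 2); linarith
  have hpos : 0 < Real.exp x := Real.exp_pos x
  rcases le_total x 0 with hx | hx
  · rw [max_eq_left hx]
    rcases le_total x (-4/3) with hx2 | hx2
    · nlinarith [Real.add_one_le_exp x]
    · have hsq : (1 + x / 2) ^ 2 ≤ Real.exp x := by
        nlinarith [Real.exp_pos (x / 2)]
      nlinarith [mul_nonneg (show (0:ℝ) ≤ 4 - x by linarith) (sub_nonneg.2 hsq),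
        mul_nonneg (mul_nonneg (neg_nonneg.2 hx) (neg_nonneg.2 hx)) (neg_nonneg.2 hx)]
  · rw [max_eq_right hx]
    have hsq : (1 + x / 2) ^ 2 ≤ Real.exp x := by
      nlinarith [Real.exp_pos (x / 2)]
    nlinarith [mul_nonneg (show (0:ℝ) ≤ 3 * x + 4 by linarith) (sub_nonneg.2 hsq),
      mul_nonneg (mul_nonneg hx hx) hx]
end

section
/- Define V : ℝ → ℝ by V(x) = (e^{2x} + 4e^x − 4x·e^x − 2x − 5)/(4x⁴) for x ≠ 0 and V(0) = 1/24. Then V is continuous on ℝ and V(x) > 0 for every x ∈ ℝ; moreover, (2|x|)³·V(x) → 4 as x → −∞, and (2x)⁴·e^{−2x}·V(x) → 4 as x → +∞. -/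
/-!
Write `N(x) = e^{2x} + 4eˣ - 4xeˣ - 2x - 5` for the numerator of `V`. Derivatives of functions
`a e^{2x} + b eˣ + c x eˣ + d x + e` are again of this form, and `N`, `N'`, `N''`, `N'''` vanish
at `0` while `N''''(0) = 4`; four applications of L'Hôpital's rule give `N(x)/x⁴ → 1/6`, which
is continuity of `V` at `0`. Since `N''(x) = 4eˣ(eˣ - 1 - x) > 0` for `x ≠ 0`, `N'` is strictly
increasing with `N'(0) = 0`, so `N > 0` away from `0`. Finally `N(x) ~ -2x` at `-∞` and
`N(x) ~ e^{2x}` at `+∞`.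
-/

open Filter Real Set Topology

noncomputable def expPoly (a b c d e x : ℝ) : ℝ :=
  a * exp (2 * x) + b * exp x + c * x * exp x + d * x + e

section ExpPoly

variable (a b c d e : ℝ)

theorem hasDerivAt_expPoly (x : ℝ) :
    HasDerivAt (expPoly a b c d e) (expPoly (2 * a) (b + c) c 0 d x) x := by
  have h2x : HasDerivAt (fun x : ℝ => 2 * x) 2 x := by
    simpa using (hasDerivAt_id x).const_mul (2 : ℝ)
  have h := (((((h2x.exp.const_mul a).add ((hasDerivAt_exp x).const_mul b)).add
    (((hasDerivAt_id x).const_mul c).mul (hasDerivAt_exp x))).add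
    ((hasDerivAt_id x).const_mul d)).add_const e)
  exact h.congr_deriv (by simp only [expPoly, id]; ring)

theorem continuous_expPoly : Continuous (expPoly a b c d e) := by
  unfold expPoly; fun_prop

theorem tendsto_expPoly_div_atBot :
    Tendsto (fun x => expPoly a b c d e x / x) atBot (𝓝 d) := by
  have he := tendsto_exp_atBot
  have hi : Tendsto (fun x : ℝ => x⁻¹) atBot (𝓝 0) := tendsto_inv_atBot_zero
  have h := ((((he.comp (tendsto_id.const_mul_atBot two_pos)).const_mul a).add
    (he.const_mul b)).add_const e).mul hi |>.add (he.const_mul c) |>.add_const d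
  simp only [mul_zero, zero_add, add_zero] at h
  refine h.congr' ?_
  filter_upwards [eventually_ne_atBot 0] with x hx
  simp only [expPoly, Function.comp, id]
  field_simp
  ring

theorem tendsto_exp_neg_mul_expPoly_atTop :
    Tendsto (fun x => exp (-(2 * x)) * expPoly a b c d e x) atTop (𝓝 a) := by
  have he : Tendsto (fun x => exp (-x)) atTop (𝓝 0) := tendsto_exp_neg_atTop_nhds_zero
  have hxe : Tendsto (fun x => x * exp (-x)) atTop (𝓝 0) := by
    simpa using tendsto_pow_mul_exp_neg_atTop_nhds_zero 1
  have h := ((((tendsto_const_nhds (x := a)).add (he.const_mul b)).add (hxe.const_mul c)).add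
    ((hxe.mul he).const_mul d)).add ((he.mul he).const_mul e)
  simp only [mul_zero, add_zero] at h
  refine h.congr fun x => ?_
  rw [expPoly, show -(2 * x) = -x + -x by ring, two_mul, exp_add, exp_add, exp_neg]
  field_simp

end ExpPoly

theorem tendsto_div_pow_succ_of_hasDerivAt {f f' : ℝ → ℝ} {n : ℕ} {L : ℝ}
    (hf : ∀ x, HasDerivAt f (f' x) x) (h0 : f 0 = 0)
    (hf' : Tendsto (fun x => f' x / x ^ n) (𝓝[≠] 0) (𝓝 L)) :
    Tendsto (fun x => f x / x ^ (n + 1)) (𝓝[≠] 0) (𝓝 (L / (n + 1))) := by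
  have hcont : Continuous f := continuous_iff_continuousAt.2 fun x => (hf x).continuousAt
  apply HasDerivAt.lhopital_zero_nhdsNE (f' := f') (g' := fun x => (n + 1) * x ^ n)
  · exact .of_forall hf
  · exact .of_forall fun x => by simpa using hasDerivAt_pow (n + 1) x
  · filter_upwards [self_mem_nhdsWithin] with x hx
    exact mul_ne_zero (by positivity) (pow_ne_zero n hx)
  · simpa [h0] using (hcont.tendsto 0).mono_left nhdsWithin_le_nhds
  · simpa using ((continuous_pow (n + 1)).tendsto (0 : ℝ)).mono_left nhdsWithin_le_nhds
  · refine (hf'.div_const (n + 1)).congr' ?_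
    filter_upwards [self_mem_nhdsWithin] with x hx
    rw [div_div, mul_comm]

theorem tendsto_expPoly_div_pow_four :
    Tendsto (fun x => expPoly 1 4 (-4) (-2) (-5) x / x ^ 4) (𝓝[≠] 0) (𝓝 (1 / 6)) := by
  have h := tendsto_div_pow_succ_of_hasDerivAt (f := expPoly 1 4 (-4) (-2) (-5))
    (hasDerivAt_expPoly _ _ _ _ _ ·) (by norm_num [expPoly]) <|
    tendsto_div_pow_succ_of_hasDerivAt (hasDerivAt_expPoly _ _ _ _ _ ·) (by norm_num [expPoly]) <|
    tendsto_div_pow_succ_of_hasDerivAt (hasDerivAt_expPoly _ _ _ _ _ ·) (by norm_num [expPoly]) <|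
    tendsto_div_pow_succ_of_hasDerivAt (n := 0) (hasDerivAt_expPoly _ _ _ _ _ ·)
      (by norm_num [expPoly]) <|
    by simpa using ((continuous_expPoly ..).tendsto 0).mono_left nhdsWithin_le_nhds
  convert h using 2
  norm_num [expPoly]

theorem strictMono_of_hasDerivAt_pos_of_ne {f f' : ℝ → ℝ} {a : ℝ}
    (hf : ∀ x, HasDerivAt f (f' x) x) (hf' : ∀ x ≠ a, 0 < f' x) : StrictMono f := by
  have hcont : Continuous f := continuous_iff_continuousAt.2 fun x => (hf x).continuousAt
  refine StrictMonoOn.Iic_union_Ici (a := a) ?_ ?_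
  · refine strictMonoOn_of_hasDerivWithinAt_pos (convex_Iic a) hcont.continuousOn
      (fun x _ => (hf x).hasDerivWithinAt) fun x hx => hf' x ?_
    rw [interior_Iic] at hx
    exact hx.ne
  · refine strictMonoOn_of_hasDerivWithinAt_pos (convex_Ici a) hcont.continuousOn
      (fun x _ => (hf x).hasDerivWithinAt) fun x hx => hf' x ?_
    rw [interior_Ici] at hx
    exact hx.ne'

theorem pos_of_hasDerivAt_of_strictMono {f f' : ℝ → ℝ} {a x : ℝ}
    (hf : ∀ x, HasDerivAt f (f' x) x) (hf' : StrictMono f') (ha : f a = 0) (ha' : f' a = 0)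
    (hx : x ≠ a) : 0 < f x := by
  have hcont : Continuous f := continuous_iff_continuousAt.2 fun x => (hf x).continuousAt
  rcases hx.lt_or_gt with hxa | hax
  · have hanti : StrictAntiOn f (Iic a) :=
      strictAntiOn_of_hasDerivWithinAt_neg (convex_Iic a) hcont.continuousOn
        (fun y _ => (hf y).hasDerivWithinAt) fun y hy => by
          rw [interior_Iic] at hy
          exact ha' ▸ hf' hy
    simpa [ha] using hanti hxa.le (mem_Iic.2 le_rfl) hxa
  · have hmono : StrictMonoOn f (Ici a) :=
      strictMonoOn_of_hasDerivWithinAt_pos (convex_Ici a) hcont.continuousOn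
        (fun y _ => (hf y).hasDerivWithinAt) fun y hy => by
          rw [interior_Ici] at hy
          exact ha' ▸ hf' hy
    simpa [ha] using hmono (mem_Ici.2 le_rfl) hax.le hax

theorem expPoly_pos {x : ℝ} (hx : x ≠ 0) : 0 < expPoly 1 4 (-4) (-2) (-5) x := by
  have hf'' : ∀ y ≠ 0, 0 < expPoly (2 * (2 * 1)) (4 + -4 + -4) (-4) 0 0 y := by
    intro y hy
    have h : expPoly (2 * (2 * 1)) (4 + -4 + -4) (-4) 0 0 y = 4 * exp y * (exp y - (y + 1)) := by
      rw [expPoly, two_mul y, exp_add]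
      ring
    rw [h]
    exact mul_pos (by positivity) (sub_pos.2 (add_one_lt_exp hy))
  refine pos_of_hasDerivAt_of_strictMono (hasDerivAt_expPoly _ _ _ _ _)
    (strictMono_of_hasDerivAt_pos_of_ne (hasDerivAt_expPoly _ _ _ _ _) hf'')
    (by norm_num [expPoly]) (by norm_num [expPoly]) hx

theorem continuous_of_eq_of_tendsto_nhdsNE {f g : ℝ → ℝ} {a : ℝ}
    (hg : ∀ x ≠ a, ContinuousAt g x) (hfg : ∀ x ≠ a, f x = g x)
    (ha : Tendsto g (𝓝[≠] a) (𝓝 (f a))) : Continuous f := by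
  refine continuous_iff_continuousAt.2 fun x => ?_
  rcases eq_or_ne x a with rfl | hx
  · rw [← continuousWithinAt_compl_self]
    exact ha.congr' (eventually_nhdsWithin_of_forall fun y hy => (hfg y hy).symm)
  · refine (hg x hx).congr ?_
    filter_upwards [isOpen_ne.mem_nhds hx] with y hy
    exact (hfg y hy).symm

/-- Properties of `V(x) = (e^{2x} + 4e^x - 4x e^x - 2x - 5)/(4x⁴)`
(with `V(0) = 1/24`): continuity, positivity, `(2|x|)³ V(x) → 4` as `x → -∞`, and
`(2x)⁴ e^{-2x} V(x) → 4` as `x → +∞`. -/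
theorem stmt_17 (V : ℝ → ℝ)
    (hV : ∀ x : ℝ, x ≠ 0 → V x =
      (Real.exp (2 * x) + 4 * Real.exp x - 4 * x * Real.exp x - 2 * x - 5) / (4 * x ^ 4))
    (hV0 : V 0 = 1 / 24) :
    Continuous V ∧ (∀ x : ℝ, 0 < V x) ∧
      Tendsto (fun x : ℝ => (2 * |x|) ^ 3 * V x) atBot (nhds 4) ∧
      Tendsto (fun x : ℝ => (2 * x) ^ 4 * Real.exp (-(2 * x)) * V x) atTop (nhds 4) := by
  set N := expPoly 1 4 (-4) (-2) (-5)
  have hVN : ∀ x ≠ 0, V x = N x / (4 * x ^ 4) := fun x hx => by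
    rw [hV x hx]
    simp only [N, expPoly]
    ring
  refine ⟨continuous_of_eq_of_tendsto_nhdsNE (fun x hx => ?_) hVN ?_, fun x => ?_, ?_, ?_⟩
  · exact (continuous_expPoly ..).continuousAt.div (by fun_prop) (by positivity)
  · rw [hV0, show (1 / 24 : ℝ) = 1 / 6 / 4 by norm_num]
    simpa only [div_div, mul_comm] using tendsto_expPoly_div_pow_four.div_const 4
  · rcases eq_or_ne x 0 with rfl | hx
    · norm_num [hV0]
    · rw [hVN x hx]
      exact div_pos (expPoly_pos hx) (by positivity)
  · rw [show (4 : ℝ) = -2 * -2 by norm_num]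
    refine ((tendsto_expPoly_div_atBot 1 4 (-4) (-2) (-5)).const_mul (-2)).congr' ?_
    filter_upwards [eventually_lt_atBot 0] with x hx
    rw [hVN x hx.ne, abs_of_neg hx]
    field_simp
    ring
  · rw [← mul_one (4 : ℝ)]
    refine ((tendsto_exp_neg_mul_expPoly_atTop 1 4 (-4) (-2) (-5)).const_mul 4).congr' ?_
    filter_upwards [eventually_gt_atTop 0] with x hx
    rw [hVN x hx.ne']
    field_simp
    ring
end

section
/- Fix T > 0. Let (λ_k)_{k≥1} and (μ_k)_{k≥1} be sequences of real numbers such that λ_k → +∞, μ_k² / λ_k → 0 as k → ∞, and μ_k² < 4λ_k for every k. For each k set ℓ_k = √(λ_k − μ_k²/4) and f_k(t) = e^{μ_k t/2}·sin(ℓ_k t)/ℓ_k. Define E : ℝ → ℝ by E(x) = (e^x − 1)/x for x ≠ 0 and E(0) = 1. Then the integrals ∫_0^T f_k(s)² ds satisfy lim_{k→∞} (2λ_k / (T·E(T·μ_k))) · ∫_0^T f_k(s)² ds = 1; equivalently, ∫_0^T f_k(s)² ds is asymptotically equivalent to (e^{μ_k T} − 1)/(2 μ_k λ_k) as k → ∞.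 -/
/-!
Since `f_k² = e^{μ_k s} (1 - cos (2 ℓ_k s)) / (2 ℓ_k²)` and `T E(T μ_k) = ∫₀ᵀ e^{μ_k s} ds =: I_k`,
the normalized quantity equals `(λ_k / ℓ_k²) (1 - C_k / I_k)` with
`C_k = ∫₀ᵀ e^{μ_k s} cos (2 ℓ_k s) ds`. Here `λ_k / ℓ_k² → 1` because `μ_k² / λ_k → 0`, and the
oscillatory integral is small: integrating exactly, `|C_k| ≤ (e^{μ_k T} + 1) / (2 √λ_k)`, while
`e^{μ_k T} + 1 ≤ (2/T + |μ_k|) I_k`, so `|C_k / I_k| ≤ (2/T + |μ_k|) / (2 √λ_k) → 0`.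
-/

open Filter intervalIntegral Real

lemma hasDerivAt_exp_mul_cos_primitive {μ ω : ℝ} (h : μ ^ 2 + ω ^ 2 ≠ 0) (s : ℝ) :
    HasDerivAt (fun s => exp (μ * s) * (μ * cos (ω * s) + ω * sin (ω * s)) / (μ ^ 2 + ω ^ 2))
      (exp (μ * s) * cos (ω * s)) s := by
  have he : HasDerivAt (fun s => exp (μ * s)) (exp (μ * s) * μ) s := by
    simpa using ((hasDerivAt_id s).const_mul μ).exp
  have hc : HasDerivAt (fun s => cos (ω * s)) (-sin (ω * s) * ω) s := by
    simpa using ((hasDerivAt_id s).const_mul ω).cos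
  have hs : HasDerivAt (fun s => sin (ω * s)) (cos (ω * s) * ω) s := by
    simpa using ((hasDerivAt_id s).const_mul ω).sin
  refine ((he.mul ((hc.const_mul μ).add (hs.const_mul ω))).div_const _).congr_deriv ?_
  rw [Pi.add_apply, div_eq_iff h]
  ring

lemma integral_exp_mul_cos {μ ω : ℝ} (h : μ ^ 2 + ω ^ 2 ≠ 0) (T : ℝ) :
    ∫ s in (0 : ℝ)..T, exp (μ * s) * cos (ω * s)
      = (exp (μ * T) * (μ * cos (ω * T) + ω * sin (ω * T)) - μ) / (μ ^ 2 + ω ^ 2) := by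
  rw [integral_eq_sub_of_hasDerivAt (fun s _ => hasDerivAt_exp_mul_cos_primitive h s)
    (by apply Continuous.intervalIntegrable; fun_prop)]
  simp [sub_div]

lemma abs_mul_cos_add_mul_sin_le (μ ω x : ℝ) :
    |μ * cos x + ω * sin x| ≤ √(μ ^ 2 + ω ^ 2) :=
  abs_le_sqrt <| by nlinarith [sq_nonneg (μ * sin x - ω * cos x), sin_sq_add_cos_sq x]

lemma abs_integral_exp_mul_cos_le {μ ω : ℝ} (h : μ ^ 2 + ω ^ 2 ≠ 0) (T : ℝ) :
    |∫ s in (0 : ℝ)..T, exp (μ * s) * cos (ω * s)| ≤ (exp (μ * T) + 1) / √(μ ^ 2 + ω ^ 2) := by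
  have hpos : 0 < μ ^ 2 + ω ^ 2 := lt_of_le_of_ne (by positivity) (Ne.symm h)
  have hbound := abs_mul_cos_add_mul_sin_le μ ω (ω * T)
  have hμ : |μ| ≤ √(μ ^ 2 + ω ^ 2) := by simpa using abs_mul_cos_add_mul_sin_le μ ω 0
  have hsqrt : 0 < √(μ ^ 2 + ω ^ 2) := sqrt_pos.2 hpos
  have hnum : |exp (μ * T) * (μ * cos (ω * T) + ω * sin (ω * T)) - μ|
      ≤ (exp (μ * T) + 1) * √(μ ^ 2 + ω ^ 2) :=
    calc |exp (μ * T) * (μ * cos (ω * T) + ω * sin (ω * T)) - μ|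
        ≤ exp (μ * T) * |μ * cos (ω * T) + ω * sin (ω * T)| + |μ| := by
          simpa [abs_mul] using abs_sub (exp (μ * T) * _) μ
      _ ≤ (exp (μ * T) + 1) * √(μ ^ 2 + ω ^ 2) := by
          nlinarith [exp_pos (μ * T)]
  rw [integral_exp_mul_cos h, abs_div, abs_of_pos hpos, div_le_div_iff₀ hpos hsqrt]
  calc _ ≤ (exp (μ * T) + 1) * √(μ ^ 2 + ω ^ 2) * √(μ ^ 2 + ω ^ 2) := by gcongr
    _ = _ := by rw [mul_assoc, mul_self_sqrt hpos.le]

lemma integral_exp_mul_of_ne_zero {μ : ℝ} (hμ : μ ≠ 0) (T : ℝ) :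
    ∫ s in (0 : ℝ)..T, exp (μ * s) = (exp (μ * T) - 1) / μ := by
  rw [integral_comp_mul_left exp hμ, integral_exp, mul_zero, exp_zero, smul_eq_mul,
    inv_mul_eq_div]

/-- Equivalently `x coth (x / 2) ≤ 2 + |x|`. -/
lemma exp_add_one_le_two_add_abs_mul_div {x : ℝ} (hx : x ≠ 0) :
    exp x + 1 ≤ (2 + |x|) * ((exp x - 1) / x) := by
  rcases hx.lt_or_gt with hx | hx
  · have h := add_one_le_exp (-x)
    have hinv : exp x * exp (-x) = 1 := by rw [← exp_add, add_neg_cancel, exp_zero]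
    rw [abs_of_neg hx, mul_div_assoc', le_div_iff_of_neg hx]
    nlinarith [mul_le_mul_of_nonneg_left h (exp_pos x).le]
  · have h := add_one_le_exp x
    rw [abs_of_pos hx, mul_div_assoc', le_div_iff₀ hx]
    nlinarith

lemma exp_add_one_le_mul_integral_exp_mul {T : ℝ} (hT : 0 < T) (μ : ℝ) :
    exp (μ * T) + 1 ≤ (2 / T + |μ|) * ∫ s in (0 : ℝ)..T, exp (μ * s) := by
  rcases eq_or_ne μ 0 with rfl | hμ
  · norm_num [hT.ne']
  · have h := exp_add_one_le_two_add_abs_mul_div (mul_ne_zero hμ hT.ne')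
    rw [integral_exp_mul_of_ne_zero hμ]
    convert h using 1
    rw [abs_mul, abs_of_pos hT]
    field_simp

lemma integral_exp_mul_pos {T : ℝ} (hT : 0 < T) (μ : ℝ) :
    0 < ∫ s in (0 : ℝ)..T, exp (μ * s) :=
  intervalIntegral_pos_of_pos_on (by apply Continuous.intervalIntegrable; fun_prop)
    (fun s _ => exp_pos _) hT

lemma abs_integral_exp_mul_cos_div_le {T : ℝ} (hT : 0 < T) {μ ω : ℝ} (h : μ ^ 2 + ω ^ 2 ≠ 0) :
    |(∫ s in (0 : ℝ)..T, exp (μ * s) * cos (ω * s)) / ∫ s in (0 : ℝ)..T, exp (μ * s)|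
      ≤ (2 / T + |μ|) / √(μ ^ 2 + ω ^ 2) := by
  have hI := integral_exp_mul_pos hT μ
  have hsqrt : 0 < √(μ ^ 2 + ω ^ 2) := sqrt_pos.2 (lt_of_le_of_ne (by positivity) (Ne.symm h))
  rw [abs_div, abs_of_pos hI, div_le_div_iff₀ hI hsqrt]
  calc |∫ s in (0 : ℝ)..T, exp (μ * s) * cos (ω * s)| * √(μ ^ 2 + ω ^ 2)
      ≤ exp (μ * T) + 1 := (le_div_iff₀ hsqrt).1 (abs_integral_exp_mul_cos_le h T)
    _ ≤ (2 / T + |μ|) * ∫ s in (0 : ℝ)..T, exp (μ * s) := exp_add_one_le_mul_integral_exp_mul hT μ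

lemma integral_sq_exp_mul_sin_div (μ ℓ T : ℝ) :
    ∫ s in (0 : ℝ)..T, (exp (μ * s / 2) * sin (ℓ * s) / ℓ) ^ 2
      = ((∫ s in (0 : ℝ)..T, exp (μ * s))
          - ∫ s in (0 : ℝ)..T, exp (μ * s) * cos (2 * ℓ * s)) / (2 * ℓ ^ 2) := by
  have hpt : ∀ s, (exp (μ * s / 2) * sin (ℓ * s) / ℓ) ^ 2
      = (exp (μ * s) - exp (μ * s) * cos (2 * ℓ * s)) / (2 * ℓ ^ 2) := fun s => by
    rw [div_pow, mul_pow, ← exp_nat_mul, sin_sq_eq_half_sub, mul_assoc 2 ℓ s]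
    ring_nf
  simp_rw [hpt]
  rw [integral_div, integral_sub (by apply Continuous.intervalIntegrable; fun_prop)
    (by apply Continuous.intervalIntegrable; fun_prop)]

section Asymptotics

variable {ι : Type*} {l : Filter ι} {lam mu : ι → ℝ}

lemma tendsto_add_abs_div_sqrt_zero (hlam : Tendsto lam l atTop)
    (hmu : Tendsto (fun k => mu k ^ 2 / lam k) l (nhds 0)) (c : ℝ) :
    Tendsto (fun k => (c + |mu k|) / √(lam k)) l (nhds 0) := by
  have h₁ : Tendsto (fun k => (√(lam k))⁻¹) l (nhds 0) :=
    (tendsto_sqrt_atTop.comp hlam).inv_tendsto_atTop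
  have h₂ := (continuous_sqrt.tendsto 0).comp hmu
  rw [sqrt_zero] at h₂
  convert (h₁.const_mul c).add h₂ using 2 with k
  · rw [Function.comp_apply, sqrt_div (sq_nonneg _), sqrt_sq_eq_abs]
    ring
  · simp

lemma tendsto_div_sub_sq_div_four (hmu : Tendsto (fun k => mu k ^ 2 / lam k) l (nhds 0))
    (hlam : ∀ k, lam k ≠ 0) :
    Tendsto (fun k => lam k / (lam k - mu k ^ 2 / 4)) l (nhds 1) := by
  have h := (tendsto_const_nhds (x := (1 : ℝ))).sub (hmu.div_const 4) |>.inv₀ (by norm_num)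
  convert h using 2 with k
  · rw [← inv_div, sub_div, div_self (hlam k), div_div, div_div, mul_comm]
  · norm_num

end Asymptotics

/-- For `λ_k → +∞`, `μ_k²/λ_k → 0`, `μ_k² < 4λ_k`, and the fundamental
solutions `f_k(t) = e^{μ_k t/2} sin(ℓ_k t)/ℓ_k` with `ℓ_k = √(λ_k - μ_k²/4)`, the
integrals satisfy `(2λ_k/(T E(T μ_k))) ∫₀ᵀ f_k(s)² ds → 1`, where
`E(x) = (e^x - 1)/x`, `E(0) = 1`. -/
theorem stmt_19 (T : ℝ) (hT : 0 < T) (lam mu : ℕ → ℝ)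
    (hlam : Tendsto lam atTop atTop)
    (hmu : Tendsto (fun k => (mu k) ^ 2 / lam k) atTop (nhds 0))
    (hlt : ∀ k, (mu k) ^ 2 < 4 * lam k)
    (ell : ℕ → ℝ) (hell : ∀ k, ell k = Real.sqrt (lam k - (mu k) ^ 2 / 4))
    (f : ℕ → ℝ → ℝ)
    (hf : ∀ k, ∀ t : ℝ, f k t = Real.exp (mu k * t / 2) * Real.sin (ell k * t) / ell k)
    (E : ℝ → ℝ) (hE : ∀ x : ℝ, x ≠ 0 → E x = (Real.exp x - 1) / x) (hE0 : E 0 = 1) :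
    Tendsto (fun k =>
        (2 * lam k / (T * E (T * mu k))) * ∫ s in (0 : ℝ)..T, (f k s) ^ 2)
      atTop (nhds 1) := by
  have hlam_pos : ∀ k, 0 < lam k := fun k => by nlinarith [hlt k, sq_nonneg (mu k)]
  have hell_sq : ∀ k, ell k ^ 2 = lam k - mu k ^ 2 / 4 := fun k => by
    rw [hell k, sq_sqrt]; linarith [hlt k]
  have hsum : ∀ k, mu k ^ 2 + (2 * ell k) ^ 2 = 4 * lam k := fun k => by
    rw [mul_pow, hell_sq k]; ring
  set I := fun k => ∫ s in (0 : ℝ)..T, exp (mu k * s)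
  set C := fun k => ∫ s in (0 : ℝ)..T, exp (mu k * s) * cos (2 * ell k * s)
  have hTE : ∀ k, T * E (T * mu k) = I k := fun k => by
    rcases eq_or_ne (mu k) 0 with h0 | h0
    · simp [I, h0, hE0]
    · simp only [I]
      rw [hE _ (mul_ne_zero hT.ne' h0), integral_exp_mul_of_ne_zero h0, mul_comm T]
      field_simp
  have hratio : Tendsto (fun k => C k / I k) atTop (nhds 0) := by
    refine squeeze_zero_norm (fun k => ?_) (tendsto_add_abs_div_sqrt_zero
      (hlam.const_mul_atTop four_pos) (by simpa [div_div, mul_comm] using hmu.div_const 4) (2 / T))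
    have h := abs_integral_exp_mul_cos_div_le hT (μ := mu k) (ω := 2 * ell k)
      (by rw [hsum k]; linarith [hlam_pos k])
    rwa [hsum k, ← norm_eq_abs] at h
  have hmain : ∀ k, (2 * lam k / (T * E (T * mu k))) * ∫ s in (0 : ℝ)..T, (f k s) ^ 2
      = lam k / (lam k - mu k ^ 2 / 4) * (1 - C k / I k) := fun k => by
    have hI : I k ≠ 0 := (integral_exp_mul_pos hT (mu k)).ne'
    simp_rw [hTE k, hf k, integral_sq_exp_mul_sin_div, hell_sq k]
    change 2 * lam k / I k * ((I k - C k) / (2 * (lam k - mu k ^ 2 / 4))) = _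
    field_simp
  simp_rw [hmain]
  simpa using (tendsto_div_sub_sq_div_four hmu fun k => (hlam_pos k).ne').mul
    (tendsto_const_nhds.sub hratio)
end
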